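/- Fix a sequence δₙ ↓ 0 such that δₙcₙ is increasing, and let εₙ ↓ 0 satisfy sup_{x∈[0,δₙcₙ]} |P(τ_x > n)/(V(x)P(τ₀ > n)) − 1| ≤ εₙ. Set ε̄ₙ := max_{k∈[n/2,n]} ε_k and δ̄ₙ := (min_{k∈[n/2,n]} δ_k c_k)/cₙ. Then for all y ≥ 0 and all n, max_{k ≤ n/2} |Q_{k,n}(y)/P(τ₀ > n−k) − V(y)| ≤ ε̄ₙ·V(y) + 2(1 + C₀ + ε̄₁)·V(Gₙ) + 2C₀·V(y)·1{y > δ̄ₙcₙ − 2Gₙ}. -/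

import Mathlib

open MeasureTheory ProbabilityTheory Filter Asymptotics Topology

noncomputable section

namespace FPT

variable {Ω : Type*}

/-- Partial sums `S n = X 1 + ... + X n` (with `S 0 = 0`). -/
def S (X : ℕ → Ω → ℝ) (n : ℕ) (ω : Ω) : ℝ := ∑ i ∈ Finset.range n, X (i + 1) ω

/-- The event `{T_g > n}`: the walk stays strictly above the boundary `g`
at all times `1 ≤ k ≤ n`.  For the constant boundary `g ≡ -x` this is the event
`{τ_x > n}`, and for `g ≡ 0` it is `{τ₀ > n}`. -/
def stay (X : ℕ → Ω → ℝ) (g : ℕ → ℝ) (n : ℕ) : Set Ω :=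
  {ω | ∀ k, 1 ≤ k → k ≤ n → g k < S X k ω}

/-- The event `{τ⁺_x > n}`: the walk stays `≤ x` at all times `1 ≤ k ≤ n`. -/
def stayBelow (X : ℕ → Ω → ℝ) (x : ℝ) (n : ℕ) : Set Ω :=
  {ω | ∀ k, 1 ≤ k → k ≤ n → S X k ω ≤ x}

/-- `Gmax g n = max_{1 ≤ k ≤ n} |g k|`. -/
def Gmax (g : ℕ → ℝ) (n : ℕ) : ℝ := Finset.fold max 0 (fun k => |g k|) (Finset.Icc 1 n)

/-- The admissible set of parameters `(α, β)`. -/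
def admissiblePair (α β : ℝ) : Prop :=
  (0 < α ∧ α < 1 ∧ |β| < 1) ∨ (1 < α ∧ α < 2 ∧ |β| ≤ 1) ∨ (α = 1 ∧ β = 0) ∨ (α = 2 ∧ β = 0)

/-- Characteristic function `G_{α,β}(t) = exp(−c₀|t|^α(1 − iβ(t/|t|)tan(πα/2)))`
of the limiting stable law. -/
def stableCF (α β c₀ t : ℝ) : ℂ :=
  Complex.exp (-(((c₀ * |t| ^ α) : ℝ) : ℂ) *
    ((1 : ℂ) - Complex.I * (β : ℂ) * ((Real.sign t : ℝ) : ℂ) *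
      ((Real.tan (Real.pi * α / 2) : ℝ) : ℂ)))

/-- `μ(u) = u⁻² ∫_{-u}^{u} x² P(X ∈ dx)`. -/
def truncSecond [MeasurableSpace Ω] (P : Measure Ω) (Y : Ω → ℝ) (u : ℝ) : ℝ :=
  u⁻¹ ^ 2 * ∫ ω, Set.indicator (Set.Icc (-u) u) (fun x => x ^ 2) (Y ω) ∂P

/-- `c n = inf{u ≥ 0 : μ(u) ≤ 1/n}`. -/
def cseq [MeasurableSpace Ω] (P : Measure Ω) (Y : Ω → ℝ) (n : ℕ) : ℝ :=
  sInf {u : ℝ | 0 ≤ u ∧ truncSecond P Y u ≤ 1 / (n : ℝ)}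

/-- The standing setup: `X 1, X 2, …` are i.i.d., centred whenever the mean exists,
`c` is the canonical norming sequence, and `S n / c n` converges in distribution
(via characteristic functions) to the stable law with parameters `(α, β)`;
i.e. `X ∈ D(α,β)`. -/
def StableWalk [MeasurableSpace Ω] (P : Measure Ω) (X : ℕ → Ω → ℝ) (c : ℕ → ℝ)
    (α β : ℝ) : Prop :=
  admissiblePair α β ∧
  (∀ i, Measurable (X i)) ∧
  (∀ i, 1 ≤ i → Measure.map (X i) P = Measure.map (X 1) P) ∧
  iIndepFun (m := fun _ => Real.measurableSpace) X P ∧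
  (Integrable (X 1) P → ∫ ω, X 1 ω ∂P = 0) ∧
  (∀ n, 1 ≤ n → c n = cseq P (X 1) n) ∧
  (∀ n, 1 ≤ n → 0 < c n) ∧
  (∃ c₀, 0 < c₀ ∧ ∀ t : ℝ,
    Tendsto (fun n => ∫ ω, Complex.exp (Complex.I * (t : ℂ) * ((S X n ω / c n : ℝ) : ℂ)) ∂P)
      atTop (𝓝 (stableCF α β c₀ t)))

/-- `ρ = lim P(S n > 0) ∈ (0,1)`. -/
def rhoSpec [MeasurableSpace Ω] (P : Measure Ω) (X : ℕ → Ω → ℝ) (ρ : ℝ) : Prop :=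
  0 < ρ ∧ ρ < 1 ∧ Tendsto (fun n => (P {ω | 0 < S X n ω}).toReal) atTop (𝓝 ρ)

/-- The properties of the renewal function `V` of the weak descending ladder heights:
nonnegative, increasing, subadditive, harmonic, regularly varying with index `α(1−ρ)`,
and `V(c n)·P(τ₀ > n) → A ∈ (0,∞)`. -/
def VProps [MeasurableSpace Ω] (P : Measure Ω) (X : ℕ → Ω → ℝ) (c : ℕ → ℝ) (V : ℝ → ℝ)
    (α ρ : ℝ) : Prop :=
  (∀ x, 0 ≤ V x) ∧ Monotone V ∧
  (∀ x y : ℝ, V (x + y) ≤ V x + V y) ∧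
  (∀ x : ℝ, 0 ≤ x → ∫ ω, Set.indicator (Set.Ioi (0 : ℝ)) V (x + X 1 ω) ∂P = V x) ∧
  (∀ lam : ℝ, 0 < lam →
    Tendsto (fun x : ℝ => V (lam * x) / V x) atTop (𝓝 (lam ^ (α * (1 - ρ))))) ∧
  (∃ A : ℝ, 0 < A ∧
    Tendsto (fun n => V (c n) * (P (stay X (fun _ => 0) n)).toReal) atTop (𝓝 A))

/-- `U_g(n) = E Z*_n = E[V(S_n − g_n); T_g > n]`. -/
def EZ [MeasurableSpace Ω] (P : Measure Ω) (X : ℕ → Ω → ℝ) (g : ℕ → ℝ) (V : ℝ → ℝ)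
    (n : ℕ) : ℝ :=
  ∫ ω in stay X g n, V (S X n ω - g n) ∂P

/-- `ν_m = ν(c m) ∧ m`, where `ν(h) = min{k ≥ 1 : Z k ≥ h}` and `Z k = S k − g k`. -/
def nuc (X : ℕ → Ω → ℝ) (g : ℕ → ℝ) (c : ℕ → ℝ) (m : ℕ) (ω : Ω) : ℕ :=
  sInf ({k | 1 ≤ k ∧ c m ≤ S X k ω - g k} ∪ {m})

/-- A sequence is slowly varying. -/
def SlowlyVaryingSeq (U : ℕ → ℝ) : Prop :=
  ∀ lam : ℝ, 0 < lam → Tendsto (fun n : ℕ => U ⌊lam * (n : ℝ)⌋₊ / U n) atTop (𝓝 1)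

/-- A sequence is regularly varying with index `r`. -/
def RegVaryingSeq (a : ℕ → ℝ) (r : ℝ) : Prop :=
  ∀ lam : ℝ, 0 < lam → Tendsto (fun n : ℕ => a ⌊lam * (n : ℝ)⌋₊ / a n) atTop (𝓝 (lam ^ r))

section Aux

variable {Ω : Type*}

private def tup (X : ℕ → Ω → ℝ) (k M : ℕ) (ω : Ω) : Fin M → ℝ := fun i => X (k + (i : ℕ) + 1) ω

private def psum (M : ℕ) (v : Fin M → ℝ) (m : ℕ) : ℝ :=
  ∑ i ∈ Finset.range m, if h : i < M then v ⟨i, h⟩ else 0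

private def Bset (M : ℕ) (a : ℕ → ℝ) : Set (Fin M → ℝ) :=
  {v | ∀ m, 1 ≤ m → m ≤ M → a m < psum M v m}

private lemma measurable_psum (M m : ℕ) : Measurable (fun v : Fin M → ℝ => psum M v m) := by
  apply Finset.measurable_sum
  intro i _
  by_cases h : i < M
  · simpa [h] using measurable_pi_apply (⟨i, h⟩ : Fin M)
  · simp [h]

private lemma measurableSet_Bset (M : ℕ) (a : ℕ → ℝ) : MeasurableSet (Bset M a) := by
  have h : Bset M a
      = ⋂ m, ⋂ (_ : 1 ≤ m), ⋂ (_ : m ≤ M), {v : Fin M → ℝ | a m < psum M v m} := by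
    ext v; simp [Bset, Set.mem_iInter]
  rw [h]
  exact MeasurableSet.iInter fun m => MeasurableSet.iInter fun _ => MeasurableSet.iInter fun _ =>
    measurableSet_lt measurable_const (measurable_psum M m)

private lemma psum_tup (X : ℕ → Ω → ℝ) (k M : ℕ) (ω : Ω) {m : ℕ} (hm : m ≤ M) :
    psum M (tup X k M ω) m = ∑ i ∈ Finset.range m, X (k + i + 1) ω := by
  apply Finset.sum_congr rfl
  intro i hi
  have h : i < M := lt_of_lt_of_le (Finset.mem_range.1 hi) hm
  simp [h, tup]

private lemma S_add (X : ℕ → Ω → ℝ) (k m : ℕ) (ω : Ω) :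
    S X (k + m) ω = S X k ω + ∑ i ∈ Finset.range m, X (k + i + 1) ω := by
  simpa [S] using Finset.sum_range_add (fun i => X (i + 1) ω) k m

private lemma Bset_mono (M : ℕ) {a a' : ℕ → ℝ} (h : ∀ m, 1 ≤ m → m ≤ M → a m ≤ a' m) :
    Bset M a' ⊆ Bset M a := fun v hv m h1 h2 => lt_of_le_of_lt (h m h1 h2) (hv m h1 h2)

private lemma map_tup_eq [MeasurableSpace Ω] (P : Measure Ω) [IsProbabilityMeasure P]
    (X : ℕ → Ω → ℝ) (hmeas : ∀ i, Measurable (X i))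
    (hid : ∀ i, 1 ≤ i → Measure.map (X i) P = Measure.map (X 1) P)
    (hind : iIndepFun (m := fun _ => Real.measurableSpace) X P) (k M : ℕ) :
    Measure.map (tup X k M) P = Measure.pi fun _ : Fin M => Measure.map (X 1) P := by
  have htup : Measurable (tup X k M) := measurable_pi_iff.2 fun i => hmeas _
  symm
  apply Measure.pi_eq
  intro s hs
  rw [Measure.map_apply htup (MeasurableSet.univ_pi hs)]
  classical
  set e : Fin M → ℕ := fun i => k + (i : ℕ) + 1 with he
  have hinj : Function.Injective e := by
    intro a b h
    simp only [he] at h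
    exact Fin.ext (by omega)
  set sets : ℕ → Set ℝ := fun j => if h : j - (k + 1) < M ∧ k + 1 ≤ j then s ⟨j - (k + 1), h.1⟩
    else Set.univ with hsets
  have hsete : ∀ i : Fin M, sets (e i) = s i := by
    intro i
    have h1 : e i - (k + 1) = (i : ℕ) := by simp only [he]; omega
    have h2 : (e i - (k + 1) < M ∧ k + 1 ≤ e i) := by
      refine ⟨?_, by simp only [he]; omega⟩
      rw [h1]; exact i.2
    rw [hsets]
    simp only [dif_pos h2]
    have h3 : (⟨e i - (k + 1), h2.1⟩ : Fin M) = i := Fin.ext h1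
    rw [h3]
  have hpre : tup X k M ⁻¹' Set.pi Set.univ s
      = ⋂ j ∈ Finset.image e Finset.univ, X j ⁻¹' sets j := by
    ext ω
    simp only [Set.mem_preimage, Set.mem_pi, Set.mem_univ, forall_true_left, Set.mem_iInter,
      Finset.mem_image, Finset.mem_univ, true_and]
    constructor
    · rintro h j ⟨i, rfl⟩
      rw [hsete i]; exact h i
    · intro h i
      have h4 := h (e i) ⟨i, rfl⟩
      rwa [hsete i] at h4
  rw [hpre]
  have hmeasets : ∀ j, j ∈ Finset.image e Finset.univ → MeasurableSet (sets j) := by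
    intro j _
    rw [hsets]
    by_cases h : j - (k + 1) < M ∧ k + 1 ≤ j
    · simpa [h] using hs _
    · simp only [dif_neg h, MeasurableSet.univ]
  rw [hind.measure_inter_preimage_eq_mul _ hmeasets]
  rw [Finset.prod_image (fun a _ b _ h => hinj h)]
  apply Finset.prod_congr rfl
  intro i _
  rw [hsete i, ← Measure.map_apply (hmeas _) (hs i), hid (e i) (by simp only [he]; omega),
    Measure.map_apply (hmeas 1) (hs i)]

private lemma prob_tup_eq [MeasurableSpace Ω] (P : Measure Ω) [IsProbabilityMeasure P]
    (X : ℕ → Ω → ℝ) (hmeas : ∀ i, Measurable (X i))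
    (hid : ∀ i, 1 ≤ i → Measure.map (X i) P = Measure.map (X 1) P)
    (hind : iIndepFun (m := fun _ => Real.measurableSpace) X P) (k M : ℕ)
    {B : Set (Fin M → ℝ)} (hB : MeasurableSet B) :
    P (tup X k M ⁻¹' B) = (Measure.pi fun _ : Fin M => Measure.map (X 1) P) B := by
  have htup : Measurable (tup X k M) := measurable_pi_iff.2 fun i => hmeas _
  rw [← map_tup_eq P X hmeas hid hind k M]
  exact (Measure.map_apply htup hB).symm

private lemma E_eq_tup (X : ℕ → Ω → ℝ) (g : ℕ → ℝ) (y : ℝ) (hy : 0 < y) (n k : ℕ) :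
    {ω | ∀ j, k ≤ j → j ≤ n → 0 < y + ((S X j ω - g j) - (S X k ω - g k))}
      = tup X k (n - k) ⁻¹' Bset (n - k) (fun m => g (k + m) - g k - y) := by
  ext ω
  simp only [Set.mem_setOf_eq, Set.mem_preimage, Bset, Set.mem_setOf_eq]
  constructor
  · intro h m h1 h2
    rw [psum_tup X k (n - k) ω h2]
    have h3 := h (k + m) (by omega) (by omega)
    have hs := S_add X k m ω
    linarith
  · intro h j hj1 hj2
    rcases eq_or_lt_of_le hj1 with rfl | hlt
    · simpa using hy
    · have h1 : 1 ≤ j - k := by omega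
      have h2 : j - k ≤ n - k := by omega
      have h3 := h (j - k) h1 h2
      rw [psum_tup X k (n - k) ω h2, show k + (j - k) = j by omega] at h3
      have hs := S_add X k (j - k) ω
      rw [show k + (j - k) = j by omega] at hs
      linarith

private lemma stay_eq_tup (X : ℕ → Ω → ℝ) (b : ℝ) (M : ℕ) :
    stay X (fun _ => b) M = tup X 0 M ⁻¹' Bset M (fun _ => b) := by
  ext ω
  simp only [stay, Set.mem_setOf_eq, Set.mem_preimage, Bset, Set.mem_setOf_eq]
  refine forall₃_congr fun m h1 h2 => ?_
  rw [psum_tup X 0 M ω h2]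
  have h3 : ∑ i ∈ Finset.range m, X (0 + i + 1) ω = S X m ω :=
    Finset.sum_congr rfl fun i _ => by rw [Nat.zero_add]
  rw [h3]

private lemma Q_between [MeasurableSpace Ω] (P : Measure Ω) [IsProbabilityMeasure P]
    (X : ℕ → Ω → ℝ) (hmeas : ∀ i, Measurable (X i))
    (hid : ∀ i, 1 ≤ i → Measure.map (X i) P = Measure.map (X 1) P)
    (hind : iIndepFun (m := fun _ => Real.measurableSpace) X P)
    (g : ℕ → ℝ) (y : ℝ) (hy : 0 < y) (n k : ℕ) (bL bU : ℝ)
    (hL : ∀ m, 1 ≤ m → m ≤ n - k → bL ≤ g (k + m) - g k - y)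
    (hU : ∀ m, 1 ≤ m → m ≤ n - k → g (k + m) - g k - y ≤ bU) :
    P (stay X (fun _ => bU) (n - k))
      ≤ P {ω | ∀ j, k ≤ j → j ≤ n → 0 < y + ((S X j ω - g j) - (S X k ω - g k))} ∧
    P {ω | ∀ j, k ≤ j → j ≤ n → 0 < y + ((S X j ω - g j) - (S X k ω - g k))}
      ≤ P (stay X (fun _ => bL) (n - k)) := by
  rw [E_eq_tup X g y hy n k, stay_eq_tup, stay_eq_tup]
  rw [prob_tup_eq P X hmeas hid hind k (n - k) (measurableSet_Bset _ _),
    prob_tup_eq P X hmeas hid hind 0 (n - k) (measurableSet_Bset _ _),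
    prob_tup_eq P X hmeas hid hind 0 (n - k) (measurableSet_Bset _ _)]
  exact ⟨measure_mono (Bset_mono _ hU), measure_mono (Bset_mono _ hL)⟩

end Aux

set_option maxHeartbeats 1000000 in
/-- **Lemma (Q-bound).** Fix `δ n ↓ 0` with `δ n · c n` increasing and let `ε n ↓ 0`
be such that `sup_{x ∈ [0, δ n c n]} |P(τ_x > n)/(V(x)P(τ₀ > n)) − 1| ≤ ε n`.
With `ε̄ n = max_{k ∈ [n/2,n]} ε k` and `δ̄ n = (min_{k ∈ [n/2,n]} δ k · c k)/c n`,
for all `y ≥ 0` and all `1 ≤ k ≤ n/2`,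
`|Q_{k,n}(y)/P(τ₀ > n−k) − V(y)|
  ≤ ε̄ n V(y) + 2(1 + C₀ + ε̄ 1) V(G n) + 2 C₀ V(y) 1{y > δ̄ n c n − 2 G n}`. -/
theorem lemma_Q_bound [MeasurableSpace Ω] (P : Measure Ω) [IsProbabilityMeasure P]
    (X : ℕ → Ω → ℝ) (c : ℕ → ℝ) (α β ρ : ℝ) (V : ℝ → ℝ) (g : ℕ → ℝ)
    (hW : StableWalk P X c α β) (hρ : rhoSpec P X ρ) (hV : VProps P X c V α ρ)
    (δ ε : ℕ → ℝ) (C₀ : ℝ) (hC₀pos : 0 < C₀)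
    (hδanti : Antitone δ) (hδ0 : Tendsto δ atTop (𝓝 0))
    (hδcmono : Monotone (fun n => δ n * c n))
    (hεanti : Antitone ε) (hε0 : Tendsto ε atTop (𝓝 0))
    (hε : ∀ n, 1 ≤ n → ∀ x : ℝ, 0 ≤ x → x ≤ δ n * c n →
      |(P (stay X (fun _ => -x) n)).toReal /
        (V x * (P (stay X (fun _ => 0) n)).toReal) - 1| ≤ ε n)
    (hC₀ : ∀ x : ℝ, 0 ≤ x → ∀ n, 1 ≤ n →
      (P (stay X (fun _ => -x) n)).toReal
        ≤ C₀ * V (min x (c n)) * (P (stay X (fun _ => 0) n)).toReal)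
    (n : ℕ) (hn : 1 ≤ n) (y : ℝ) (hy : 0 ≤ y) (k : ℕ) (hk1 : 1 ≤ k) (hk : 2 * k ≤ n) :
    |(P {ω | ∀ j, k ≤ j → j ≤ n →
          0 < y + ((S X j ω - g j) - (S X k ω - g k))}).toReal /
        (P (stay X (fun _ => 0) (n - k))).toReal - V y|
      ≤ (Finset.fold max 0 ε (Finset.Icc ((n + 1) / 2) n)) * V y
        + 2 * (1 + C₀ + Finset.fold max 0 ε (Finset.Icc 1 1)) * V (Gmax g n)
        + 2 * C₀ * V y *
          Set.indicator
            (Set.Ioi ((Finset.fold min (δ n * c n) (fun j => δ j * c j)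
                (Finset.Icc ((n + 1) / 2) n)) / c n * c n - 2 * Gmax g n))
            (fun _ => (1 : ℝ)) y := by
  classical
  obtain ⟨_, hmeas, hid, hind, _, _, hcpos, _⟩ := hW
  obtain ⟨hV0, hVmono, hVsub, _, _, _⟩ := hV
  -- basic positivity facts
  have hεnn : ∀ m, 0 ≤ ε m := fun m =>
    le_of_tendsto hε0 (Filter.eventually_atTop.2 ⟨m, fun b hb => hεanti hb⟩)
  have hδnn : ∀ m, 0 ≤ δ m := fun m =>
    le_of_tendsto hδ0 (Filter.eventually_atTop.2 ⟨m, fun b hb => hδanti hb⟩)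
  have hδc0 : ∀ m, 1 ≤ m → (0 : ℝ) ≤ δ m * c m := fun m hm =>
    mul_nonneg (hδnn m) (hcpos m hm).le
  set G := Gmax g n with hGdef
  have hG0 : 0 ≤ G := (Finset.le_fold_max _).2 (Or.inl le_rfl)
  have habsg : ∀ j, 1 ≤ j → j ≤ n → |g j| ≤ G := fun j h1 h2 =>
    (Finset.le_fold_max _).2 (Or.inr ⟨j, Finset.mem_Icc.2 ⟨h1, h2⟩, le_rfl⟩)
  set εb := Finset.fold max 0 ε (Finset.Icc ((n + 1) / 2) n) with hεbdef
  set εb1 := Finset.fold max 0 ε (Finset.Icc 1 1) with hεb1def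
  set D := Finset.fold min (δ n * c n) (fun j => δ j * c j) (Finset.Icc ((n + 1) / 2) n)
    with hDdef
  have hεbnn : (0 : ℝ) ≤ εb := (Finset.le_fold_max _).2 (Or.inl le_rfl)
  have hεb1nn : (0 : ℝ) ≤ εb1 := (Finset.le_fold_max _).2 (Or.inl le_rfl)
  have hε1le : ε 1 ≤ εb1 :=
    (Finset.le_fold_max _).2 (Or.inr ⟨1, Finset.mem_Icc.2 ⟨le_rfl, le_rfl⟩, le_rfl⟩)
  set M := n - k with hMdef
  have hM1 : 1 ≤ M := by omega
  have hMn : M ≤ n := by omega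
  have hεMle : ε M ≤ εb :=
    (Finset.le_fold_max _).2 (Or.inr ⟨M, Finset.mem_Icc.2 ⟨by omega, by omega⟩, le_rfl⟩)
  have hεM1 : ε M ≤ εb1 := le_trans (hεanti hM1) hε1le
  have hDle : D ≤ δ M * c M :=
    (Finset.fold_min_le _).2 (Or.inr ⟨M, Finset.mem_Icc.2 ⟨by omega, by omega⟩, le_rfl⟩)
  have hDcn : D / c n * c n = D := div_mul_cancel₀ _ (hcpos n hn).ne'
  -- step: positivity of `P(τ₀ > m)` whenever `ε m < 1`, and `V 0 = 1`, `1 ≤ C₀`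
  have hpos : ∀ m, 1 ≤ m → ε m < 1 → 0 < (P (stay X (fun _ => 0) m)).toReal := by
    intro m hm hem
    rcases lt_or_eq_of_le (ENNReal.toReal_nonneg :
        (0:ℝ) ≤ (P (stay X (fun _ => 0) m)).toReal) with h | h
    · exact h
    · exfalso
      have happ := hε m hm 0 le_rfl (hδc0 m hm)
      simp only [neg_zero, ← h, mul_zero, div_zero, zero_sub, abs_neg, abs_one] at happ
      linarith
  obtain ⟨N, hN⟩ := Filter.eventually_atTop.1 (hε0.eventually_lt_const one_pos)
  have hV1 : V 0 = 1 := by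
    have hV0ne : V 0 ≠ 0 := by
      intro h0
      set m := max N 1 with hm
      have hεm : ε m < 1 := hN m (le_max_left _ _)
      have hm1 : 1 ≤ m := le_max_right _ _
      have happ := hε m hm1 0 le_rfl (hδc0 m hm1)
      simp only [neg_zero, h0, zero_mul, div_zero, zero_sub, abs_neg, abs_one] at happ
      linarith
    have hkey : ∀ m, m ≥ max N 1 → |1 / V 0 - 1| ≤ ε m := by
      intro m hm
      have hεm : ε m < 1 := hN m (le_trans (le_max_left _ _) hm)
      have hm1 : 1 ≤ m := le_trans (le_max_right _ _) hm
      have happ := hε m hm1 0 le_rfl (hδc0 m hm1)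
      simp only [neg_zero] at happ
      have hp := (hpos m hm1 hεm).ne'
      rw [show (P (stay X (fun _ => 0) m)).toReal / (V 0 * (P (stay X (fun _ => 0) m)).toReal)
          = 1 / V 0 by rw [mul_comm, ← div_div, div_self hp]] at happ
      exact happ
    have hlim : |1 / V 0 - 1| ≤ 0 :=
      ge_of_tendsto hε0 (Filter.eventually_atTop.2 ⟨max N 1, hkey⟩)
    have h2 : 1 / V 0 = 1 := by
      have := abs_nonneg (1 / V 0 - 1)
      have h3 : |1 / V 0 - 1| = 0 := le_antisymm hlim this
      have := abs_eq_zero.1 h3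
      linarith
    field_simp at h2
    linarith
  have hC1 : 1 ≤ C₀ := by
    set m := max N 1 with hm
    have hεm : ε m < 1 := hN m (le_max_left _ _)
    have hm1 : 1 ≤ m := le_max_right _ _
    have hp := hpos m hm1 hεm
    have happ := hC₀ 0 le_rfl m hm1
    simp only [neg_zero] at happ
    rw [min_eq_left (hcpos m hm1).le, hV1, mul_one] at happ
    nlinarith
  -- notation for the two toReal probabilities
  set p := (P (stay X (fun _ => 0) M)).toReal with hpdef
  set Q := (P {ω | ∀ j, k ≤ j → j ≤ n →
      0 < y + ((S X j ω - g j) - (S X k ω - g k))}).toReal with hQdef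
  have hpnn : 0 ≤ p := ENNReal.toReal_nonneg
  have hQnn : 0 ≤ Q := ENNReal.toReal_nonneg
  have hVy0 : 0 ≤ V y := hV0 y
  have hVG0 : 0 ≤ V G := hV0 G
  have hVG1 : 1 ≤ V G := by rw [← hV1]; exact hVmono hG0
  have hVy1 : 1 ≤ V y := by rw [← hV1]; exact hVmono hy
  have hindnn : (0 : ℝ) ≤ Set.indicator (Set.Ioi (D / c n * c n - 2 * G))
      (fun _ => (1 : ℝ)) y := Set.indicator_nonneg (fun _ _ => zero_le_one) y
  -- degenerate case `p = 0`
  rcases eq_or_lt_of_le hpnn with hp0 | hp0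
  · have hεM1' : 1 ≤ ε M := by
      have happ := hε M hM1 0 le_rfl (hδc0 M hM1)
      simp only [neg_zero, ← hpdef, ← hp0, mul_zero, div_zero, zero_sub, abs_neg,
        abs_one] at happ
      linarith
    have h1 : 1 ≤ εb := le_trans hεM1' hεMle
    rw [← hp0, div_zero, zero_sub, abs_neg, abs_of_nonneg hVy0]
    have t1 : V y ≤ εb * V y := le_mul_of_one_le_left hVy0 h1
    have t2 : (0:ℝ) ≤ 2 * (1 + C₀ + εb1) * V G := mul_nonneg (by linarith) hVG0
    have t3 : (0:ℝ) ≤ 2 * C₀ * V y * Set.indicator (Set.Ioi (D / c n * c n - 2 * G))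
        (fun _ => (1:ℝ)) y := mul_nonneg (mul_nonneg (by linarith) hVy0) hindnn
    linarith
  -- case `y = 0`
  rcases eq_or_lt_of_le hy with rfl | hy0
  · have hE : {ω : Ω | ∀ j, k ≤ j → j ≤ n →
        0 < (0 : ℝ) + ((S X j ω - g j) - (S X k ω - g k))} = ∅ := by
      ext ω
      simp only [Set.mem_setOf_eq, Set.mem_empty_iff_false, iff_false, not_forall]
      exact ⟨k, le_rfl, by omega, by linarith⟩
    rw [hE] at hQdef
    simp only [measure_empty, ENNReal.toReal_zero] at hQdef
    rw [hQdef, hV1, zero_div, zero_sub, abs_neg, abs_one]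
    have t3 : (1:ℝ) ≤ 2 * (1 + C₀ + εb1) * V G := by
      have t5 : (1:ℝ) ≤ 2 * (1 + C₀ + εb1) := by linarith
      calc (1:ℝ) ≤ 2 * (1 + C₀ + εb1) := t5
        _ = 2 * (1 + C₀ + εb1) * 1 := by ring
        _ ≤ 2 * (1 + C₀ + εb1) * V G := by
            exact mul_le_mul_of_nonneg_left hVG1 (by linarith)
    have t4 : (0:ℝ) ≤ 2 * C₀ * 1 * Set.indicator (Set.Ioi (D / c n * c n - 2 * G))
        (fun _ => (1:ℝ)) 0 := mul_nonneg (by linarith) hindnn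
    linarith [hεbnn]
  -- main case: `0 < y`, `0 < p`
  -- sandwich the probability Q between two constant-boundary probabilities
  have hbounds := Q_between P X hmeas hid hind g y hy0 n k (-(y + 2 * G)) (-(y - 2 * G))
    (fun m h1 h2 => by
      have ha := abs_le.1 (habsg (k + m) (by omega) (by omega))
      have hb := abs_le.1 (habsg k hk1 (by omega))
      linarith [ha.1, ha.2, hb.1, hb.2])
    (fun m h1 h2 => by
      have ha := abs_le.1 (habsg (k + m) (by omega) (by omega))
      have hb := abs_le.1 (habsg k hk1 (by omega))
      linarith [ha.1, ha.2, hb.1, hb.2])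
  set qU := (P (stay X (fun _ => -(y + 2 * G)) M)).toReal with hqUdef
  set qL := (P (stay X (fun _ => -(y - 2 * G)) M)).toReal with hqLdef
  have hQle : Q ≤ qU := by
    rw [hQdef, hqUdef]
    have h := hbounds.2
    rw [← hMdef] at h
    exact ENNReal.toReal_mono (measure_ne_top P _) h
  have hQge : qL ≤ Q := by
    rw [hQdef, hqLdef]
    have h := hbounds.1
    rw [← hMdef] at h
    exact ENNReal.toReal_mono (measure_ne_top P _) h
  have hqUnn : 0 ≤ qU := ENNReal.toReal_nonneg
  have hqLnn : 0 ≤ qL := ENNReal.toReal_nonneg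
  have hVy2G : V (y + 2 * G) ≤ V y + 2 * V G := by
    have h1 := hVsub y (2 * G)
    have h2 : V (2 * G) ≤ 2 * V G := by
      have := hVsub G G
      rw [two_mul]; linarith
    linarith
  have hVyp : 0 < V (y + 2 * G) := lt_of_lt_of_le (lt_of_lt_of_le one_pos hVy1)
    (hVmono (by linarith))
  -- upper estimate
  have hupper : Q / p - V y ≤ εb * V y + 2 * (1 + C₀ + εb1) * V G + 2 * C₀ * V y *
      Set.indicator (Set.Ioi (D / c n * c n - 2 * G)) (fun _ => (1 : ℝ)) y := by
    by_cases hA : y + 2 * G ≤ δ M * c M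
    · have happ := hε M hM1 (y + 2 * G) (by linarith) hA
      have h1 : qU / (V (y + 2 * G) * p) ≤ 1 + ε M := by
        have := (abs_le.1 happ).2
        rw [← hqUdef, ← hpdef] at this
        linarith
      have h2 : qU ≤ (1 + ε M) * (V (y + 2 * G) * p) :=
        (div_le_iff₀ (mul_pos hVyp hp0)).1 h1
      have h3 : Q / p ≤ (1 + ε M) * V (y + 2 * G) := by
        rw [div_le_iff₀ hp0]
        calc Q ≤ qU := hQle
          _ ≤ (1 + ε M) * (V (y + 2 * G) * p) := h2
          _ = (1 + ε M) * V (y + 2 * G) * p := by ring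
      have hεMnn := hεnn M
      have a1 : ε M * V y ≤ εb * V y := mul_le_mul_of_nonneg_right hεMle hVy0
      have a2 : (1 + ε M) * V (y + 2 * G) ≤ (1 + ε M) * (V y + 2 * V G) :=
        mul_le_mul_of_nonneg_left hVy2G (by linarith)
      have a3 : ε M * V G ≤ εb1 * V G := mul_le_mul_of_nonneg_right hεM1 hVG0
      have a4 : (0:ℝ) ≤ C₀ * V G := mul_nonneg (by linarith) hVG0
      have a5 : (0:ℝ) ≤ 2 * C₀ * V y * Set.indicator (Set.Ioi (D / c n * c n - 2 * G))
          (fun _ => (1:ℝ)) y := mul_nonneg (mul_nonneg (by linarith) hVy0) hindnn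
      linarith [h3, a1, a2, a3, a4, a5]
    · have hmem : y ∈ Set.Ioi (D / c n * c n - 2 * G) := by
        rw [hDcn]
        have : D ≤ y + 2 * G := le_trans hDle (le_of_not_ge hA)
        simp only [Set.mem_Ioi]
        linarith
      rw [Set.indicator_of_mem hmem]
      have happ := hC₀ (y + 2 * G) (by linarith) M hM1
      rw [← hqUdef, ← hpdef] at happ
      have h1 : V (min (y + 2 * G) (c M)) ≤ V (y + 2 * G) := hVmono (min_le_left _ _)
      have h2 : Q / p ≤ C₀ * V (y + 2 * G) := by
        rw [div_le_iff₀ hp0]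
        calc Q ≤ qU := hQle
          _ ≤ C₀ * V (min (y + 2 * G) (c M)) * p := happ
          _ ≤ C₀ * V (y + 2 * G) * p := by
              exact mul_le_mul_of_nonneg_right
                (mul_le_mul_of_nonneg_left h1 hC₀pos.le) hpnn
      have a1 : C₀ * V (y + 2 * G) ≤ C₀ * (V y + 2 * V G) :=
        mul_le_mul_of_nonneg_left hVy2G hC₀pos.le
      have a2 : (0:ℝ) ≤ εb * V y := mul_nonneg hεbnn hVy0
      have a3 : (0:ℝ) ≤ εb1 * V G := mul_nonneg hεb1nn hVG0
      have a4 : (0:ℝ) ≤ C₀ * V y := mul_nonneg hC₀pos.le hVy0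
      linarith [h2, a1, a2, a3, a4, hVG0, hVy0]
  -- lower estimate
  have hlower : V y - Q / p ≤ εb * V y + 2 * (1 + C₀ + εb1) * V G + 2 * C₀ * V y *
      Set.indicator (Set.Ioi (D / c n * c n - 2 * G)) (fun _ => (1 : ℝ)) y := by
    have hQpnn : 0 ≤ Q / p := div_nonneg hQnn hpnn
    by_cases hy2G : y ≤ 2 * G
    · have h1 : V y ≤ 2 * V G := by
        have h2 : V y ≤ V (2 * G) := hVmono hy2G
        have h3 := hVsub G G
        rw [two_mul] at h2
        linarith
      have a2 : (0:ℝ) ≤ εb * V y := mul_nonneg hεbnn hVy0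
      have a3 : (0:ℝ) ≤ εb1 * V G := mul_nonneg hεb1nn hVG0
      have a4 : (0:ℝ) ≤ C₀ * V G := mul_nonneg hC₀pos.le hVG0
      have a5 : (0:ℝ) ≤ 2 * C₀ * V y * Set.indicator (Set.Ioi (D / c n * c n - 2 * G))
          (fun _ => (1:ℝ)) y := mul_nonneg (mul_nonneg (by linarith) hVy0) hindnn
      linarith [h1, hQpnn, a2, a3, a4, a5, hVG0]
    · push_neg at hy2G
      by_cases hB : y - 2 * G ≤ δ M * c M
      · have happ := hε M hM1 (y - 2 * G) (by linarith) hB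
        have hVx1 : 1 ≤ V (y - 2 * G) := by rw [← hV1]; exact hVmono (by linarith)
        have hVxy : V (y - 2 * G) ≤ V y := hVmono (by linarith)
        have h1 : 1 - ε M ≤ qL / (V (y - 2 * G) * p) := by
          have := (abs_le.1 happ).1
          rw [← hqLdef, ← hpdef] at this
          linarith
        have h2 : (1 - ε M) * (V (y - 2 * G) * p) ≤ qL :=
          (le_div_iff₀ (mul_pos (lt_of_lt_of_le one_pos hVx1) hp0)).1 h1
        have h3 : (1 - ε M) * V (y - 2 * G) ≤ Q / p := by
          rw [le_div_iff₀ hp0]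
          calc (1 - ε M) * V (y - 2 * G) * p = (1 - ε M) * (V (y - 2 * G) * p) := by ring
            _ ≤ qL := h2
            _ ≤ Q := hQge
        have h4 : V y ≤ V (y - 2 * G) + 2 * V G := by
          have h5 := hVsub (y - 2 * G) (2 * G)
          rw [sub_add_cancel] at h5
          have h6 := hVsub G G
          rw [← two_mul] at h6
          linarith
        have hεMnn := hεnn M
        have a1 : ε M * V (y - 2 * G) ≤ ε M * V y := mul_le_mul_of_nonneg_left hVxy hεMnn
        have a2 : ε M * V y ≤ εb * V y := mul_le_mul_of_nonneg_right hεMle hVy0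
        have a3 : (0:ℝ) ≤ εb1 * V G := mul_nonneg hεb1nn hVG0
        have a4 : (0:ℝ) ≤ C₀ * V G := mul_nonneg hC₀pos.le hVG0
        have a5 : (0:ℝ) ≤ 2 * C₀ * V y * Set.indicator (Set.Ioi (D / c n * c n - 2 * G))
            (fun _ => (1:ℝ)) y := mul_nonneg (mul_nonneg (by linarith) hVy0) hindnn
        linarith [h3, h4, a1, a2, a3, a4, a5, hVG0]
      · push_neg at hB
        have hmem : y ∈ Set.Ioi (D / c n * c n - 2 * G) := by
          rw [hDcn]
          simp only [Set.mem_Ioi]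
          have : D ≤ δ M * c M := hDle
          linarith
        rw [Set.indicator_of_mem hmem]
        have a1 : V y ≤ C₀ * V y := le_mul_of_one_le_left hVy0 hC1
        have a2 : (0:ℝ) ≤ εb * V y := mul_nonneg hεbnn hVy0
        have a3 : (0:ℝ) ≤ εb1 * V G := mul_nonneg hεb1nn hVG0
        have a4 : (0:ℝ) ≤ C₀ * V G := mul_nonneg hC₀pos.le hVG0
        have a5 : (0:ℝ) ≤ C₀ * V y := mul_nonneg hC₀pos.le hVy0
        linarith [hQpnn, a1, a2, a3, a4, a5, hVG0]
  exact abs_sub_le_iff.2 ⟨hupper, hlower⟩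

end FPT
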